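/- For the standard normal distribution, ∫₀¹∫₀¹ [Φ^{-1}(u)/φ(Φ^{-1}(u))] · [Φ^{-1}(v)/φ(Φ^{-1}(v))] · (min(u,v) − uv) du dv = 1/2. -/

import Mathlib

open MeasureTheory ProbabilityTheory Real Set Filter Topology

noncomputable def stdphi (x : ℝ) : ℝ := gaussianPDFReal 0 1 x
noncomputable def stdPhi (x : ℝ) : ℝ := ∫ t in Set.Iic x, gaussianPDFReal 0 1 t
noncomputable def stdPhiInv (u : ℝ) : ℝ := sInf {x : ℝ | u ≤ stdPhi x}

lemma stdphi_eq (x : ℝ) : stdphi x = (Real.sqrt (2*π))⁻¹ * Real.exp (-(x^2/2)) := by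
  rw [stdphi, gaussianPDFReal]
  push_cast
  norm_num
  left; ring_nf

lemma stdphi_pos (x : ℝ) : 0 < stdphi x := gaussianPDFReal_pos 0 1 x one_ne_zero

lemma stdphi_neg (x : ℝ) : stdphi (-x) = stdphi x := by
  rw [stdphi_eq, stdphi_eq]; ring_nf

lemma continuous_stdphi : Continuous stdphi := by
  simp only [funext stdphi_eq]
  fun_prop

lemma integrable_stdphi : Integrable stdphi := integrable_gaussianPDFReal 0 1

lemma integral_stdphi : ∫ x, stdphi x = 1 := integral_gaussianPDFReal_eq_one 0 one_ne_zero

lemma hasDerivAt_stdphi (x : ℝ) : HasDerivAt stdphi (-(x * stdphi x)) x := by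
  have h : HasDerivAt (fun x : ℝ => (Real.sqrt (2*π))⁻¹ * Real.exp (-(x^2/2)))
      ((Real.sqrt (2*π))⁻¹ * (Real.exp (-(x^2/2)) * -x)) x := by
    have h1 : HasDerivAt (fun x : ℝ => -(x^2/2)) (-x) x := by
      have := ((hasDerivAt_pow 2 x).div_const 2).neg
      simp at this; exact this
    exact (h1.exp).const_mul _
  have h2 : HasDerivAt stdphi ((Real.sqrt (2*π))⁻¹ * (Real.exp (-(x^2/2)) * -x)) x :=
    h.congr_of_eventuallyEq (Eventually.of_forall fun y => stdphi_eq y)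
  convert h2 using 1
  rw [stdphi_eq]; ring

noncomputable def c2 : ℝ := (Real.sqrt (2*π))⁻¹ * Real.exp 2

lemma c2_pos : 0 < c2 := by
  have : 0 < Real.sqrt (2*π) := Real.sqrt_pos.2 (by positivity)
  exact mul_pos (inv_pos.2 this) (Real.exp_pos _)

lemma stdphi_le (t : ℝ) : stdphi t ≤ c2 * Real.exp (2*t) := by
  rw [stdphi_eq, c2, mul_assoc, ← Real.exp_add]
  have h : 0 < (Real.sqrt (2*π))⁻¹ := by
    have : 0 < Real.sqrt (2*π) := Real.sqrt_pos.2 (by positivity)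
    positivity
  refine mul_le_mul_of_nonneg_left (Real.exp_le_exp.2 ?_) h.le
  nlinarith [sq_nonneg (t+2)]

lemma stdphi_le' (t : ℝ) : stdphi t ≤ c2 * Real.exp (-(2*t)) := by
  have := stdphi_le (-t)
  rw [stdphi_neg] at this
  simpa using this
lemma stdPhi_nonneg (x : ℝ) : 0 ≤ stdPhi x :=
  setIntegral_nonneg measurableSet_Iic fun t _ => (stdphi_pos t).le

lemma stdPhi_sub (a b : ℝ) : stdPhi b - stdPhi a = ∫ t in a..b, stdphi t :=
  (intervalIntegral.integral_Iic_sub_Iic integrable_stdphi.integrableOn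
    integrable_stdphi.integrableOn)

lemma hasDerivAt_stdPhi (x : ℝ) : HasDerivAt stdPhi (stdphi x) x := by
  have h : HasDerivAt (fun y => stdPhi 0 + ∫ t in (0:ℝ)..y, stdphi t) (stdphi x) x := by
    refine HasDerivAt.const_add _ ?_
    exact intervalIntegral.integral_hasDerivAt_right
      (integrable_stdphi.intervalIntegrable)
      (continuous_stdphi.stronglyMeasurable.stronglyMeasurableAtFilter)
      continuous_stdphi.continuousAt
  refine h.congr_of_eventuallyEq (Eventually.of_forall fun y => ?_)
  have := stdPhi_sub 0 y
  show stdPhi y = stdPhi 0 + ∫ t in (0:ℝ)..y, stdphi t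
  linarith

lemma continuous_stdPhi : Continuous stdPhi := by
  have : Differentiable ℝ stdPhi := fun x => (hasDerivAt_stdPhi x).differentiableAt
  exact this.continuous

lemma strictMono_stdPhi : StrictMono stdPhi := by
  intro a b hab
  have h : 0 < ∫ t in a..b, stdphi t :=
    intervalIntegral.intervalIntegral_pos_of_pos
      (integrable_stdphi.intervalIntegrable) (fun t => stdphi_pos t) hab
  have := stdPhi_sub a b
  linarith

lemma stdPhi_add_compl (x : ℝ) : stdPhi x + ∫ t in Ioi x, stdphi t = 1 := by
  have h := setIntegral_union (f := stdphi) (μ := volume) (Iic_disjoint_Ioi (le_refl x))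
    measurableSet_Ioi integrable_stdphi.integrableOn integrable_stdphi.integrableOn
  rw [Iic_union_Ioi, setIntegral_univ, integral_stdphi] at h
  exact h.symm

lemma stdPhi_compl_nonneg (x : ℝ) : 0 ≤ ∫ t in Ioi x, stdphi t :=
  setIntegral_nonneg measurableSet_Ioi fun t _ => (stdphi_pos t).le

lemma stdPhi_le_one (x : ℝ) : stdPhi x ≤ 1 := by
  have := stdPhi_add_compl x; have := stdPhi_compl_nonneg x; linarith

lemma stdPhi_pos (x : ℝ) : 0 < stdPhi x :=
  lt_of_le_of_lt (stdPhi_nonneg (x-1)) (strictMono_stdPhi (by linarith))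

lemma stdPhi_lt_one (x : ℝ) : stdPhi x < 1 :=
  lt_of_lt_of_le (strictMono_stdPhi (show x < x+1 by linarith)) (stdPhi_le_one (x+1))

lemma stdPhi_le (y : ℝ) : stdPhi y ≤ c2 * Real.exp y * Real.exp y := by
  have h1 : ∫ t in Iic y, stdphi t ≤ ∫ t in Iic y, c2 * Real.exp y * Real.exp t := by
    refine setIntegral_mono_on integrable_stdphi.integrableOn
      (((integrableOn_exp_Iic y).const_mul _)) measurableSet_Iic fun t ht => ?_
    calc stdphi t ≤ c2 * Real.exp (2*t) := stdphi_le t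
    _ = c2 * Real.exp t * Real.exp t := by rw [two_mul, Real.exp_add, mul_assoc]
    _ ≤ c2 * Real.exp y * Real.exp t :=
        mul_le_mul_of_nonneg_right (mul_le_mul_of_nonneg_left
          (Real.exp_le_exp.2 (mem_Iic.1 ht)) c2_pos.le) (Real.exp_pos t).le
  calc stdPhi y ≤ ∫ t in Iic y, c2 * Real.exp y * Real.exp t := h1
  _ = c2 * Real.exp y * Real.exp y := by
      rw [integral_const_mul, integral_exp_Iic]

lemma stdPhi_compl_le (y : ℝ) : ∫ t in Ioi y, stdphi t ≤ c2 * Real.exp (-y) * Real.exp (-y) := by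
  have h1 : ∫ t in Ioi y, stdphi t ≤ ∫ t in Ioi y, c2 * Real.exp (-y) * Real.exp (-t) := by
    refine setIntegral_mono_on integrable_stdphi.integrableOn
      ((((exp_neg_integrableOn_Ioi y one_pos).congr_fun (fun t _ => by norm_num)
        measurableSet_Ioi).const_mul _)) measurableSet_Ioi fun t ht => ?_
    calc stdphi t ≤ c2 * Real.exp (-(2*t)) := stdphi_le' t
    _ = c2 * Real.exp (-t) * Real.exp (-t) := by
        rw [show -(2*t) = -t + -t by ring, Real.exp_add, mul_assoc]
    _ ≤ c2 * Real.exp (-y) * Real.exp (-t) :=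
        mul_le_mul_of_nonneg_right (mul_le_mul_of_nonneg_left
          (Real.exp_le_exp.2 (neg_le_neg (le_of_lt (mem_Ioi.1 ht)))) c2_pos.le)
          (Real.exp_pos (-t)).le
  calc ∫ t in Ioi y, stdphi t ≤ ∫ t in Ioi y, c2 * Real.exp (-y) * Real.exp (-t) := h1
  _ = c2 * Real.exp (-y) * Real.exp (-y) := by
      rw [integral_const_mul, integral_exp_neg_Ioi]

lemma tendsto_stdPhi_atBot : Tendsto stdPhi atBot (𝓝 0) := by
  have h1 : Tendsto (fun y => c2 * Real.exp y * Real.exp y) atBot (𝓝 0) := by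
    have := (Real.tendsto_exp_atBot.const_mul c2).mul Real.tendsto_exp_atBot
    simpa using this
  refine tendsto_of_tendsto_of_tendsto_of_le_of_le tendsto_const_nhds h1
    (fun y => stdPhi_nonneg y) (fun y => stdPhi_le y)

lemma tendsto_stdPhi_atTop : Tendsto stdPhi atTop (𝓝 1) := by
  have h1 : Tendsto (fun y => 1 - c2 * Real.exp (-y) * Real.exp (-y)) atTop (𝓝 1) := by
    have h2 : Tendsto (fun y:ℝ => c2 * Real.exp (-y) * Real.exp (-y)) atTop (𝓝 0) := by
      have := ((tendsto_exp_neg_atTop_nhds_zero.const_mul c2).mul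
        tendsto_exp_neg_atTop_nhds_zero)
      simpa using this
    simpa using ((tendsto_const_nhds : Tendsto (fun _ : ℝ => (1:ℝ)) atTop (𝓝 1)).sub h2)
  refine tendsto_of_tendsto_of_tendsto_of_le_of_le h1 tendsto_const_nhds
    (fun y => ?_) (fun y => stdPhi_le_one y)
  have := stdPhi_add_compl y; have := stdPhi_compl_le y; linarith
lemma stdPhi_neg (x : ℝ) : stdPhi (-x) = 1 - stdPhi x := by
  have h : stdPhi (-x) = ∫ t in Ioi x, stdphi t := by
    rw [show stdPhi (-x) = ∫ t in Iic (-x), stdphi t from rfl,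
      ← integral_comp_neg_Ioi]
    exact setIntegral_congr_fun measurableSet_Ioi fun t _ => stdphi_neg t
  have := stdPhi_add_compl x
  linarith

lemma range_stdPhi : Set.range stdPhi = Ioo 0 1 := by
  apply Set.eq_of_subset_of_subset
  · rintro u ⟨x, rfl⟩
    exact ⟨stdPhi_pos x, stdPhi_lt_one x⟩
  · rintro u ⟨h0, h1⟩
    obtain ⟨a, ha⟩ := (tendsto_stdPhi_atBot.eventually_lt_const h0).exists
    obtain ⟨b, hb⟩ := (tendsto_stdPhi_atTop.eventually_const_lt h1).exists
    exact intermediate_value_univ a b continuous_stdPhi ⟨ha.le, hb.le⟩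

lemma stdPhiInv_stdPhi (x : ℝ) : stdPhiInv (stdPhi x) = x := by
  have h : {y : ℝ | stdPhi x ≤ stdPhi y} = Ici x := by
    ext y; simp [strictMono_stdPhi.le_iff_le]
  rw [stdPhiInv, h, csInf_Ici]

lemma subst (g : ℝ → ℝ) :
    ∫ u in Ioo (0:ℝ) 1, g u = ∫ x, stdphi x * g (stdPhi x) := by
  have h := integral_image_eq_integral_abs_deriv_smul MeasurableSet.univ
    (fun x _ => (hasDerivAt_stdPhi x).hasDerivWithinAt) (strictMono_stdPhi.injective.injOn) g
  rw [Set.image_univ, range_stdPhi] at h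
  rw [h, setIntegral_univ]
  refine integral_congr_ae (Eventually.of_forall fun x => ?_)
  simp only [smul_eq_mul]
  rw [abs_of_pos (stdphi_pos x)]
lemma integrable_mul_stdphi : Integrable (fun x => x * stdphi x) := by
  have h := (integrable_mul_exp_neg_mul_sq (b := (1:ℝ)/2) (by norm_num)).const_mul
    ((Real.sqrt (2*π))⁻¹)
  refine h.congr (Eventually.of_forall fun x => ?_)
  show (Real.sqrt (2*π))⁻¹ * (x * Real.exp (-((1:ℝ)/2) * x^2)) = x * stdphi x
  rw [stdphi_eq, show -((1:ℝ)/2) * x^2 = -(x^2/2) by ring]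
  ring

lemma integrable_sq_mul_stdphi : Integrable (fun x => x^2 * stdphi x) := by
  have h := (integrable_rpow_mul_exp_neg_mul_sq (b := (1:ℝ)/2) (by norm_num)
    (s := 2) (by norm_num)).const_mul ((Real.sqrt (2*π))⁻¹)
  refine h.congr (Eventually.of_forall fun x => ?_)
  show (Real.sqrt (2*π))⁻¹ * (x ^ (2:ℝ) * Real.exp (-((1:ℝ)/2) * x^2)) = x^2 * stdphi x
  rw [stdphi_eq, show -((1:ℝ)/2) * x^2 = -(x^2/2) by ring,
    show x ^ (2:ℝ) = x^2 by
      rw [show (2:ℝ) = ((2:ℕ):ℝ) by norm_num, Real.rpow_natCast]]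
  ring

lemma tendsto_mul_stdphi_atTop : Tendsto (fun x => x * stdphi x) atTop (𝓝 0) := by
  have hg : Tendsto (fun x : ℝ => c2 * (x * Real.exp (-x))) atTop (𝓝 0) := by
    have := (tendsto_pow_mul_exp_neg_atTop_nhds_zero 1).const_mul c2
    simp only [pow_one, mul_zero] at this
    exact this
  refine squeeze_zero_norm' ?_ hg
  filter_upwards [eventually_ge_atTop (0:ℝ)] with x hx
  have h1 : stdphi x ≤ c2 * Real.exp (-x) := by
    calc stdphi x ≤ c2 * Real.exp (-(2*x)) := stdphi_le' x
    _ ≤ c2 * Real.exp (-x) := by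
        refine mul_le_mul_of_nonneg_left (Real.exp_le_exp.2 (by linarith)) c2_pos.le
  rw [Real.norm_eq_abs, abs_mul, abs_of_nonneg hx, abs_of_pos (stdphi_pos x)]
  calc x * stdphi x ≤ x * (c2 * Real.exp (-x)) :=
        mul_le_mul_of_nonneg_left h1 hx
  _ = c2 * (x * Real.exp (-x)) := by ring

lemma tendsto_mul_stdphi_atBot : Tendsto (fun x => x * stdphi x) atBot (𝓝 0) := by
  have h := (tendsto_mul_stdphi_atTop.comp tendsto_neg_atBot_atTop).neg
  rw [neg_zero] at h
  refine h.congr fun x => ?_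
  simp only [Function.comp_apply, stdphi_neg]
  ring

lemma integral_sq_mul_stdphi : ∫ x, x^2 * stdphi x = 1 := by
  have hderiv : ∀ x : ℝ, HasDerivAt (fun y => stdPhi y - y * stdphi y) (x^2 * stdphi x) x := by
    intro x
    have h1 := (hasDerivAt_id x).mul (hasDerivAt_stdphi x)
    have h2 := (hasDerivAt_stdPhi x).sub h1
    refine h2.congr_deriv ?_
    simp only [id_eq, one_mul]
    ring
  have hbot : Tendsto (fun y => stdPhi y - y * stdphi y) atBot (𝓝 0) := by
    simpa using tendsto_stdPhi_atBot.sub tendsto_mul_stdphi_atBot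
  have htop : Tendsto (fun y => stdPhi y - y * stdphi y) atTop (𝓝 1) := by
    simpa using tendsto_stdPhi_atTop.sub tendsto_mul_stdphi_atTop
  have := integral_of_hasDerivAt_of_tendsto hderiv integrable_sq_mul_stdphi hbot htop
  simpa using this
lemma tendsto_F_atBot :
    Tendsto (fun y => ((y^2-1) * stdPhi y + y * stdphi y)/2) atBot (𝓝 0) := by
  have h1 : Tendsto (fun y : ℝ => (y^2-1) * stdPhi y) atBot (𝓝 0) := by
    have hg : Tendsto (fun y : ℝ => c2 * ((y^2+1) * Real.exp y)) atBot (𝓝 0) := by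
      have ha : Tendsto (fun x : ℝ => x^2 * Real.exp (-x) + Real.exp (-x)) atTop (𝓝 0) := by
        simpa using (tendsto_pow_mul_exp_neg_atTop_nhds_zero 2).add
          tendsto_exp_neg_atTop_nhds_zero
      have hb := (ha.comp tendsto_neg_atBot_atTop).const_mul c2
      rw [mul_zero] at hb
      refine hb.congr fun y => ?_
      simp only [Function.comp_apply, neg_neg]
      ring
    refine squeeze_zero_norm' ?_ hg
    filter_upwards [eventually_le_atBot (0:ℝ)] with y hy
    rw [Real.norm_eq_abs, abs_mul, abs_of_nonneg (stdPhi_nonneg y)]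
    have hb1 : |y^2-1| ≤ y^2+1 := by
      rw [abs_le]; constructor <;> nlinarith [sq_nonneg y]
    have hb2 : stdPhi y ≤ c2 * Real.exp y := by
      calc stdPhi y ≤ c2 * Real.exp y * Real.exp y := stdPhi_le y
      _ ≤ c2 * Real.exp y * 1 :=
          mul_le_mul_of_nonneg_left (Real.exp_le_one_iff.2 hy)
            (mul_pos c2_pos (Real.exp_pos y)).le
      _ = c2 * Real.exp y := by ring
    calc |y^2-1| * stdPhi y ≤ (y^2+1) * (c2 * Real.exp y) := by
          exact mul_le_mul hb1 hb2 (stdPhi_nonneg y) (by positivity)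
    _ = c2 * ((y^2+1) * Real.exp y) := by ring
  have := (h1.add tendsto_mul_stdphi_atBot).div_const 2
  simpa using this

lemma integrableOn_mul_stdPhi_Iic (x : ℝ) :
    IntegrableOn (fun y => y * stdPhi y) (Iic x) := by
  have h0 : IntegrableOn (fun y => y * stdPhi y) (Iic 0) := by
    refine Integrable.mono' (g := fun y => c2 * Real.exp y)
      ((integrableOn_exp_Iic 0).const_mul c2)
      ((continuous_id.mul continuous_stdPhi).aestronglyMeasurable.restrict) ?_
    refine (ae_restrict_iff' measurableSet_Iic).2 (Eventually.of_forall fun y hy => ?_)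
    have hy0 : y ≤ 0 := hy
    have key : (-y) * Real.exp y ≤ 1 := by
      have h1 : -y ≤ Real.exp (-y) := by linarith [Real.add_one_le_exp (-y)]
      calc (-y) * Real.exp y ≤ Real.exp (-y) * Real.exp y :=
            mul_le_mul_of_nonneg_right h1 (Real.exp_pos y).le
      _ = 1 := by rw [← Real.exp_add]; simp
    rw [Real.norm_eq_abs, abs_mul, abs_of_nonpos hy0, abs_of_nonneg (stdPhi_nonneg y)]
    calc (-y) * stdPhi y ≤ (-y) * (c2 * Real.exp y * Real.exp y) :=
          mul_le_mul_of_nonneg_left (stdPhi_le y) (by linarith)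
    _ = c2 * Real.exp y * ((-y) * Real.exp y) := by ring
    _ ≤ c2 * Real.exp y * 1 := by
        exact mul_le_mul_of_nonneg_left key (mul_pos c2_pos (Real.exp_pos y)).le
    _ = c2 * Real.exp y := by ring
  have h1 : IntegrableOn (fun y => y * stdPhi y) (Icc 0 x) :=
    (continuous_id.mul continuous_stdPhi).integrableOn_Icc
  refine (h0.union h1).mono_set fun y hy => ?_
  rcases le_or_gt y 0 with h | h
  · exact Or.inl h
  · exact Or.inr ⟨h.le, hy⟩

lemma integral_A (x : ℝ) :
    ∫ y in Iic x, y * stdPhi y = ((x^2-1) * stdPhi x + x * stdphi x)/2 := by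
  have hderiv : ∀ y ∈ Iic x,
      HasDerivAt (fun y => ((y^2-1) * stdPhi y + y * stdphi y)/2) (y * stdPhi y) y := by
    intro y _
    have h1 := ((hasDerivAt_pow 2 y).sub_const 1).mul (hasDerivAt_stdPhi y)
    have h2 := (hasDerivAt_id y).mul (hasDerivAt_stdphi y)
    have h3 := (h1.add h2).div_const 2
    refine h3.congr_deriv ?_
    simp only [id_eq, one_mul, pow_one, Nat.cast_ofNat]
    ring
  have := integral_Iic_of_hasDerivAt_of_tendsto' hderiv
    (integrableOn_mul_stdPhi_Iic x) tendsto_F_atBot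
  simpa using this
lemma integrableOn_mul_one_sub_stdPhi_Ioi (x : ℝ) :
    IntegrableOn (fun y => y * (1 - stdPhi y)) (Ioi x) := by
  rw [← (Measure.measurePreserving_neg (volume : Measure ℝ)).integrableOn_comp_preimage
      (Homeomorph.neg ℝ).measurableEmbedding]
  have h : IntegrableOn (fun z => -(z * stdPhi z)) (Iic (-x)) :=
    (integrableOn_mul_stdPhi_Iic (-x)).neg
  refine (h.mono_set (fun z hz => ?_)).congr_fun (fun z _ => ?_) ?_
  · exact le_of_lt (by simpa using hz)
  · show -(z * stdPhi z) = (fun y => y * (1 - stdPhi y)) (-z)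
    simp only
    rw [stdPhi_neg]
    ring
  · simpa using (measurableSet_Iio : MeasurableSet (Iio (-x)))

lemma integral_B (x : ℝ) :
    ∫ y in Ioi x, y * (1 - stdPhi y)
      = (x * stdphi x - (x^2-1) * (1 - stdPhi x))/2 := by
  have h := integral_comp_neg_Ioi x (fun z => -(z * stdPhi z))
  have h1 : ∀ y : ℝ, -(-y * stdPhi (-y)) = y * (1 - stdPhi y) := fun y => by
    rw [stdPhi_neg]; ring
  simp only [h1] at h
  rw [h, integral_neg, integral_A (-x), stdPhi_neg, stdphi_neg]
  ring

lemma integral_K (x : ℝ) :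
    ∫ y, y * (min (stdPhi x) (stdPhi y) - stdPhi x * stdPhi y)
      = x * stdphi x / 2 := by
  have hIic : EqOn (fun y => y * (min (stdPhi x) (stdPhi y) - stdPhi x * stdPhi y))
      (fun y => (1 - stdPhi x) * (y * stdPhi y)) (Iic x) := fun y hy => by
    have h : stdPhi y ≤ stdPhi x := strictMono_stdPhi.monotone (mem_Iic.1 hy)
    simp only
    rw [min_eq_right h]
    ring
  have hIoi : EqOn (fun y => y * (min (stdPhi x) (stdPhi y) - stdPhi x * stdPhi y))
      (fun y => stdPhi x * (y * (1 - stdPhi y))) (Ioi x) := fun y hy => by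
    have h : stdPhi x ≤ stdPhi y := strictMono_stdPhi.monotone (le_of_lt (mem_Ioi.1 hy))
    simp only
    rw [min_eq_left h]
    ring
  have i1 : IntegrableOn (fun y => y * (min (stdPhi x) (stdPhi y) - stdPhi x * stdPhi y))
      (Iic x) :=
    IntegrableOn.congr_fun ((integrableOn_mul_stdPhi_Iic x).const_mul (1 - stdPhi x))
      (fun y hy => (hIic hy).symm) measurableSet_Iic
  have i2 : IntegrableOn (fun y => y * (min (stdPhi x) (stdPhi y) - stdPhi x * stdPhi y))
      (Ioi x) :=
    IntegrableOn.congr_fun ((integrableOn_mul_one_sub_stdPhi_Ioi x).const_mul (stdPhi x))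
      (fun y hy => (hIoi hy).symm) measurableSet_Ioi
  have hsplit := setIntegral_union (f := fun y => y * (min (stdPhi x) (stdPhi y)
      - stdPhi x * stdPhi y)) (μ := volume) (Iic_disjoint_Ioi (le_refl x))
    measurableSet_Ioi i1 i2
  rw [Iic_union_Ioi, setIntegral_univ] at hsplit
  rw [hsplit, setIntegral_congr_fun measurableSet_Iic hIic,
    setIntegral_congr_fun measurableSet_Ioi hIoi,
    integral_const_mul, integral_const_mul, integral_A x, integral_B x]
  ring
/-- Special case of Lemma B for the standard normal distribution:
`∫₀¹∫₀¹ [Φ⁻¹(u)/φ(Φ⁻¹(u))]·[Φ⁻¹(v)/φ(Φ⁻¹(v))]·(min(u,v)−uv) du dv = 1/2`. -/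
theorem stmt3 :
    ∫ u in Set.Ioo (0:ℝ) 1, ∫ v in Set.Ioo (0:ℝ) 1,
        (stdPhiInv u / stdphi (stdPhiInv u)) * (stdPhiInv v / stdphi (stdPhiInv v))
          * (min u v - u * v)
      = 1/2 := by
  have h1 := subst (fun u => ∫ v in Set.Ioo (0:ℝ) 1,
    (stdPhiInv u / stdphi (stdPhiInv u)) * (stdPhiInv v / stdphi (stdPhiInv v))
      * (min u v - u * v))
  rw [h1]
  have key : ∀ x : ℝ, stdphi x * (∫ v in Set.Ioo (0:ℝ) 1,
      (stdPhiInv (stdPhi x) / stdphi (stdPhiInv (stdPhi x)))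
        * (stdPhiInv v / stdphi (stdPhiInv v)) * (min (stdPhi x) v - stdPhi x * v))
      = x^2 * stdphi x / 2 := by
    intro x
    have h2 := subst (fun v => (stdPhiInv (stdPhi x) / stdphi (stdPhiInv (stdPhi x)))
        * (stdPhiInv v / stdphi (stdPhiInv v)) * (min (stdPhi x) v - stdPhi x * v))
    rw [h2]
    have h3 : ∀ y : ℝ, stdphi y * ((stdPhiInv (stdPhi x) / stdphi (stdPhiInv (stdPhi x)))
        * (stdPhiInv (stdPhi y) / stdphi (stdPhiInv (stdPhi y)))
        * (min (stdPhi x) (stdPhi y) - stdPhi x * stdPhi y))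
        = (x / stdphi x) * (y * (min (stdPhi x) (stdPhi y) - stdPhi x * stdPhi y)) := by
      intro y
      rw [stdPhiInv_stdPhi, stdPhiInv_stdPhi]
      field_simp [(stdphi_pos x).ne', (stdphi_pos y).ne']
    rw [integral_congr_ae (Eventually.of_forall h3), integral_const_mul, integral_K x]
    field_simp [(stdphi_pos x).ne']
  rw [integral_congr_ae (Eventually.of_forall key)]
  have : ∀ x : ℝ, x^2 * stdphi x / 2 = (1/2) * (x^2 * stdphi x) := fun x => by ring
  rw [integral_congr_ae (Eventually.of_forall this), integral_const_mul,
    integral_sq_mul_stdphi]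
  norm_num
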